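/- If the control consistency relation R_k is an equivalence relation (in particular transitive) and the automaton's transition function maps R_k-classes into R_k-classes (for all (x,x') ∈ R_k and σ enabled at both, (ξ(x,σ), ξ(x',σ)) ∈ R_k), then the partition of X into R_k-equivalence classes is a control congruence, and it is the coarsest control congruence: every control congruence refines it. -/
import Mathlib


/-- Condition (i) of a control cover: all states in a common cell are control consistent. -/
def condI {X : Type*} (R : X → X → Prop) (C : Set (Set X)) : Prop :=
  ∀ π ∈ C, ∀ x ∈ π, ∀ x' ∈ π, R x x'

/-- Condition (ii) of a control cover: defined successors of a cell lie in a common cell. -/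
def condII {X E : Type*} (ξ : X → E → Option X) (C : Set (Set X)) : Prop :=
  ∀ π ∈ C, ∀ σ : E, (∃ x ∈ π, (ξ x σ).isSome) →
    ∃ π' ∈ C, ∀ x' ∈ π, ∀ y, ξ x' σ = some y → y ∈ π'

/-- A control congruence: a partition of the state set that is a control cover. -/
def ControlCongruence {X E : Type*} (ξ : X → E → Option X) (R : X → X → Prop)
    (C : Set (Set X)) : Prop :=
  Setoid.IsPartition C ∧ condI R C ∧ condII ξ C


/-- Partition C refines partition C' if every cell of C is contained in a cell of C'. -/
def Refines {X : Type*} (C C' : Set (Set X)) : Prop :=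
  ∀ π ∈ C, ∃ π' ∈ C', π ⊆ π'

/-- if R_k is an equivalence relation whose classes are mapped into
    classes by the transition function, then the partition into R_k-classes is a control
    congruence, and every control congruence refines it (it is the coarsest one). -/
theorem equivalence_classes_coarsest_congruence {X E : Type*}
    (ξ : X → E → Option X) (R : X → X → Prop)
    (hrefl : ∀ x, R x x) (hsymm : ∀ x y, R x y → R y x)
    (htrans : ∀ x y z, R x y → R y z → R x z)
    (hfwd : ∀ x x' : X, R x x' → ∀ (σ : E) (y y' : X),
      ξ x σ = some y → ξ x' σ = some y' → R y y') :
    ControlCongruence ξ R {s : Set X | ∃ x : X, s = {y | R x y}} ∧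
    ∀ C : Set (Set X), ControlCongruence ξ R C →
      Refines C {s : Set X | ∃ x : X, s = {y | R x y}} := by
  constructor
  · refine ⟨⟨?_, ?_⟩, ?_, ?_⟩
    · rintro ⟨a, ha⟩
      have : a ∈ (∅ : Set X) := ha ▸ hrefl a
      exact this
    · intro x
      refine ⟨{y | R x y}, ⟨⟨x, rfl⟩, hrefl x⟩, ?_⟩
      rintro b ⟨⟨a, rfl⟩, hax⟩
      ext z
      exact ⟨fun hz => htrans x a z (hsymm a x hax) hz,
        fun hz => htrans a x z hax hz⟩
    · rintro π ⟨a, rfl⟩ x hx x' hx'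
      exact htrans x a x' (hsymm a x hx) hx'
    · rintro π ⟨a, rfl⟩ σ ⟨x, hx, hsome⟩
      obtain ⟨y0, hy0⟩ := Option.isSome_iff_exists.mp hsome
      refine ⟨{y | R y0 y}, ⟨y0, rfl⟩, ?_⟩
      rintro x' hx' y hy
      exact hfwd x x' (htrans x a x' (hsymm a x hx) hx') σ y0 y hy0 hy
  · rintro C ⟨⟨hne, _⟩, hI, _⟩ π hπ
    obtain ⟨x, hx⟩ := Set.nonempty_iff_ne_empty.mpr (fun h => hne (h ▸ hπ))
    refine ⟨{y | R x y}, ⟨x, rfl⟩, fun z hz => hI π hπ x hx z hz⟩
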